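/- Let v be a stem in a forest T, let R be the set of leaf neighbors of v, and let r = |R| ≥ 1. If r+1 is a triangular number, then s̊(T) ≥ s̊(T − R) + r + u_r. -/

import Mathlib

variable {V : Type} [Fintype V] [DecidableEq V]

/-- The `k`-th triangular number `t_k = C(k+1,2)`. -/
def tri (k : ℕ) : ℕ := (k + 1).choose 2

/-- A natural number is triangular if it equals `t_k` for some `k`. -/
def IsTriangular (m : ℕ) : Prop := ∃ k, m = tri k

/-- `uval r = max {k : t_k ≤ r}`. -/
def uval (r : ℕ) : ℕ := Nat.findGreatest (fun k => tri k ≤ r) r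

open Classical in
/-- Sum-color cost (optimal total score of the slow-coloring game) of the subgraph
of `G` induced by `S`: it is `0` when there are no vertices, and otherwise the maximum
over nonempty marked sets `M ⊆ S` of `|M|` plus the minimum over nonempty independent
subsets `I ⊆ M` of the sum-color cost of the graph with `I` deleted. -/
noncomputable def scost (G : SimpleGraph V) (S : Finset V) : ℕ :=
  if S = ∅ then 0
  else
    (S.powerset.erase ∅).attach.sup fun M =>
      M.1.card +
      WithBot.unbotD 0
        ((((M.1.powerset.erase ∅).filter
              fun I => ∀ x ∈ I, ∀ y ∈ I, ¬ G.Adj x y).attach.image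
            fun I => scost G (S \ I.1)).min)
termination_by S.card
decreasing_by
  · have hI := I.2
    have hM := M.2
    simp only [Finset.mem_filter, Finset.mem_erase, Finset.mem_powerset] at hI hM
    have hsub : I.1 ⊆ S := hI.1.2.trans hM.2
    have hne : I.1.Nonempty := Finset.nonempty_iff_ne_empty.mpr hI.1.1
    exact Finset.card_lt_card (Finset.sdiff_ssubset hsub hne)

/-- A vertex is a leaf if it has exactly one neighbor. -/
def IsLeaf (G : SimpleGraph V) (v : V) : Prop := (G.neighborSet v).ncard = 1

/-- A stem in a forest: a vertex with at least one leaf neighbor and at most one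
non-leaf neighbor. -/
def IsStem (G : SimpleGraph V) (v : V) : Prop :=
  (∃ w, G.Adj v w ∧ IsLeaf G w) ∧ {w | G.Adj v w ∧ ¬ IsLeaf G w}.ncard ≤ 1


/-!
Two estimates on the cost drive the argument. Adding `a` new vertices raises the cost by at least
`a` (Lister opens with an optimal mark for the old graph), and deleting a vertex `v` lowers it by at
most `1 + d(v)` (Painter answers as in `G - v`, adding `v` to the colored set whenever none of its
neighbours is colored).

For a stem `v` with leaf set `R`, the vertex `v` has at most one neighbour in `T - R`, so deleting
it from `T - R` costs at most `2`. Lister marks `v` together with `k + 1` leaves, where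
`t_{k+1} ≤ |R| + 1`. If Painter colors `v`, the leaves still cost one point each; otherwise Painter
colors at most `k + 1` leaves and induction applies with `k - 1`, since `t_k = t_{k+1} - (k + 1)`.
When `r + 1` is triangular the largest admissible `k` is `u_r`.
-/

lemma tri_succ (k : ℕ) : tri (k + 1) = tri k + (k + 1) := by
  rw [tri, tri, Nat.choose_succ_succ', Nat.choose_one_right, add_comm]

lemma le_tri (k : ℕ) : k ≤ tri k := by
  induction k with
  | zero => exact Nat.zero_le _
  | succ k ih => rw [tri_succ]; omega

lemma tri_mono : Monotone tri := fun _ _ h => Nat.choose_le_choose 2 (Nat.succ_le_succ h)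

lemma uval_eq_of_tri_le_of_lt {k n : ℕ} (h₁ : tri k ≤ n) (h₂ : n < tri (k + 1)) : uval n = k :=
  Nat.findGreatest_eq_iff.mpr ⟨(le_tri k).trans h₁, fun _ => h₁,
    fun _ hkm _ hm => (h₂.trans_le (tri_mono hkm)).not_ge hm⟩

namespace SimpleGraph

private lemma forall_not_adj_iff_isIndepSet {α : Type*} {G : SimpleGraph α} {I : Finset α} :
    (∀ x ∈ I, ∀ y ∈ I, ¬ G.Adj x y) ↔ G.IsIndepSet (I : Set α) :=
  ⟨fun h x hx y hy _ => h x hx y hy, fun h _ hx _ hy hxy => h hx hy (G.ne_of_adj hxy) hxy⟩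

variable {G : SimpleGraph V} {S T M I : Finset V} {B : ℕ}

-- `Finset.min` is `WithTop`-valued; `scost` reads it through `WithBot.unbotD`, both being `Option`.
private lemma unbotD_min_eq_min' {T : Finset ℕ} (hT : T.Nonempty) :
    WithBot.unbotD 0 T.min = T.min' hT := by
  rw [← Finset.coe_min' hT]
  rfl

@[simp]
lemma scost_empty : scost G ∅ = 0 := by
  rw [scost, if_pos rfl]

open Classical in
private lemma scost_eq_sup (hS : S.Nonempty) :
    scost G S = (S.powerset.erase ∅).attach.sup fun M =>
      M.1.card + WithBot.unbotD 0
        ((((M.1.powerset.erase ∅).filter fun I => ∀ x ∈ I, ∀ y ∈ I, ¬ G.Adj x y).attach.image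
          fun I => scost G (S \ I.1)).min) := by
  rw [scost, if_neg hS.ne_empty]

lemma le_scost (hMS : M ⊆ S) (hM : M.Nonempty)
    (h : ∀ I ⊆ M, I.Nonempty → G.IsIndepSet (I : Set V) → B ≤ M.card + scost G (S \ I)) :
    B ≤ scost G S := by
  classical
  rw [scost_eq_sup (hM.mono hMS)]
  have hMmem : M ∈ S.powerset.erase ∅ := by simp [hM.ne_empty, hMS]
  refine le_trans ?_ (Finset.le_sup (Finset.mem_attach _ ⟨M, hMmem⟩))
  obtain ⟨x, hx⟩ := hM
  have hne : (((M.powerset.erase ∅).filter fun I => ∀ x ∈ I, ∀ y ∈ I, ¬ G.Adj x y).attach.image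
      fun I => scost G (S \ I.1)).Nonempty :=
    ⟨_, Finset.mem_image_of_mem _ (Finset.mem_attach _ ⟨{x}, by simp [hx]⟩)⟩
  rw [unbotD_min_eq_min' hne]
  obtain ⟨⟨I, hI⟩, -, hIeq⟩ := Finset.mem_image.mp (Finset.min'_mem _ hne)
  simp only [Finset.mem_filter, Finset.mem_erase, Finset.mem_powerset,
    forall_not_adj_iff_isIndepSet] at hI
  rw [← hIeq]
  exact h I hI.1.2 (Finset.nonempty_iff_ne_empty.mpr hI.1.1) hI.2

lemma scost_le
    (h : ∀ M ⊆ S, M.Nonempty → ∃ I ⊆ M, I.Nonempty ∧ G.IsIndepSet (I : Set V) ∧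
      M.card + scost G (S \ I) ≤ B) :
    scost G S ≤ B := by
  classical
  obtain rfl | hS := S.eq_empty_or_nonempty
  · simp
  rw [scost_eq_sup hS]
  refine Finset.sup_le fun ⟨M, hM⟩ _ => ?_
  simp only [Finset.mem_erase, Finset.mem_powerset] at hM
  obtain ⟨I, hIM, hI, hIind, hle⟩ := h M hM.2 (Finset.nonempty_iff_ne_empty.mpr hM.1)
  have hImem : scost G (S \ I) ∈ (((M.powerset.erase ∅).filter
      fun I => ∀ x ∈ I, ∀ y ∈ I, ¬ G.Adj x y).attach.image fun I => scost G (S \ I.1)) :=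
    Finset.mem_image.mpr ⟨⟨I, by simp [hI.ne_empty, hIM, forall_not_adj_iff_isIndepSet, hIind]⟩,
      Finset.mem_attach _ _, rfl⟩
  rw [unbotD_min_eq_min' ⟨_, hImem⟩]
  exact le_trans (Nat.add_le_add_left (Finset.min'_le _ _ hImem) _) hle

lemma card_le_scost : S.card ≤ scost G S := by
  obtain rfl | hS := S.eq_empty_or_nonempty
  · simp
  · exact le_scost subset_rfl hS fun _ _ _ _ => Nat.le_add_right _ _

lemma exists_answer_le_scost (hMS : M ⊆ S) (hM : M.Nonempty) :
    ∃ I ⊆ M, I.Nonempty ∧ G.IsIndepSet (I : Set V) ∧ M.card + scost G (S \ I) ≤ scost G S := by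
  by_contra! h
  exact (scost G S).lt_irrefl (le_scost hMS hM h)

lemma exists_mark_scost_le (hS : S.Nonempty) :
    ∃ M ⊆ S, M.Nonempty ∧ ∀ I ⊆ M, I.Nonempty → G.IsIndepSet (I : Set V) →
      scost G S ≤ M.card + scost G (S \ I) := by
  by_contra! h
  have hpos : 0 < scost G S := (hS.card_pos).trans_le card_le_scost
  have : scost G S ≤ scost G S - 1 :=
    scost_le fun M hMS hM => (h M hMS hM).imp fun _ ⟨hIM, hI, hind, hlt⟩ =>
      ⟨hIM, hI, hind, Nat.le_sub_one_of_lt hlt⟩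
  omega

lemma scost_add_card_le_scost_union (hST : Disjoint S T) :
    scost G S + T.card ≤ scost G (S ∪ T) := by
  induction S using Finset.strongInduction with
  | H S ih =>
  obtain rfl | hS := S.eq_empty_or_nonempty
  · simpa using card_le_scost (G := G) (S := T)
  obtain ⟨M, hMS, hM, hopt⟩ := exists_mark_scost_le (G := G) hS
  refine le_scost (hMS.trans Finset.subset_union_left) hM fun I hIM hI hind => ?_
  have hIS : I ⊆ S := hIM.trans hMS
  have hsplit : (S ∪ T) \ I = S \ I ∪ T := by
    rw [Finset.union_sdiff_distrib,
      Finset.sdiff_eq_self_of_disjoint (hST.symm.mono_right hIS)]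
  have hrest := ih (S \ I) (Finset.sdiff_ssubset hIS hI)
    (hST.mono_left Finset.sdiff_subset)
  rw [hsplit]
  linarith [hopt I hIM hI hind]

lemma scost_le_scost_erase_add [DecidableRel G.Adj] {v : V} (hv : v ∈ S) :
    scost G S ≤ scost G (S.erase v) + 1 + (S.filter (G.Adj v)).card := by
  induction S using Finset.strongInduction with
  | H S ih =>
  have hrest : ∀ I ⊆ S, I.Nonempty → v ∉ I →
      scost G (S \ I) ≤ scost G (S.erase v \ I) + 1 + ((S \ I).filter (G.Adj v)).card := by
    intro I hIS hI hvI
    rw [Finset.erase_sdiff_comm]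
    exact ih _ (Finset.sdiff_ssubset hIS hI) (Finset.mem_sdiff.mpr ⟨hv, hvI⟩)
  have hfilter_mono : ∀ I : Finset V,
      ((S \ I).filter (G.Adj v)).card ≤ (S.filter (G.Adj v)).card :=
    fun I => Finset.card_le_card (Finset.filter_subset_filter _ Finset.sdiff_subset)
  refine scost_le fun M hMS hM => ?_
  by_cases hvM : v ∈ M
  · have hMcard : M.card = (M.erase v).card + 1 := (Finset.card_erase_add_one hvM).symm
    obtain hMv | hMv := (M.erase v).eq_empty_or_nonempty
    · refine ⟨{v}, by simpa using hvM, Finset.singleton_nonempty v, by simp, ?_⟩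
      rw [Finset.sdiff_singleton_eq_erase, hMcard, hMv, Finset.card_empty]
      omega
    obtain ⟨I, hIM, hI, hind, hle⟩ := exists_answer_le_scost (Finset.erase_subset_erase v hMS) hMv
    have hvI : v ∉ I := fun h => Finset.notMem_erase v M (hIM h)
    have hIS : I ⊆ S := hIM.trans ((Finset.erase_subset v M).trans hMS)
    by_cases hN : ∃ u ∈ I, G.Adj v u
    · -- Coloring a neighbour of `v` lowers its degree, which pays for the mark on `v`.
      obtain ⟨u, huI, hvu⟩ := hN
      have hlt : ((S \ I).filter (G.Adj v)).card < (S.filter (G.Adj v)).card := by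
        refine Finset.card_lt_card (Finset.ssubset_iff_subset_ne.mpr
          ⟨Finset.filter_subset_filter _ Finset.sdiff_subset, fun h => ?_⟩)
        have hu : u ∈ S.filter (G.Adj v) := Finset.mem_filter.mpr ⟨hIS huI, hvu⟩
        rw [← h, Finset.mem_filter, Finset.mem_sdiff] at hu
        exact hu.1.2 huI
      refine ⟨I, hIM.trans (Finset.erase_subset v M), hI, hind, ?_⟩
      have := hrest I hIS hI hvI
      omega
    · push Not at hN
      refine ⟨insert v I, Finset.insert_subset hvM (hIM.trans (Finset.erase_subset v M)),
        Finset.insert_nonempty v I, ?_, ?_⟩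
      · rw [Finset.coe_insert]
        exact hind.insert fun u hu _ => ⟨hN u hu, fun h => hN u hu h.symm⟩
      · rw [Finset.sdiff_insert, ← Finset.erase_sdiff_comm]
        omega
  · obtain ⟨I, hIM, hI, hind, hle⟩ :=
      exists_answer_le_scost (Finset.subset_erase.mpr ⟨hMS, hvM⟩) hM
    refine ⟨I, hIM, hI, hind, ?_⟩
    have := hrest I (hIM.trans hMS) hI fun h => hvM (hIM h)
    have := hfilter_mono I
    omega

lemma scost_add_card_add_le_of_forall_adj [DecidableRel G.Adj] {v : V} {k : ℕ} (hvS : v ∈ S)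
    (hdeg : (S.filter (G.Adj v)).card ≤ 1) (hT : ∀ w ∈ T, G.Adj v w) (hST : Disjoint S T)
    (hk : tri (k + 1) ≤ T.card + 1) :
    scost G S + T.card + k ≤ scost G (S ∪ T) := by
  induction T using Finset.strongInduction generalizing k with
  | H T ih =>
  obtain _ | k := k
  · simpa using scost_add_card_le_scost_union hST
  have hkT : k + 2 ≤ T.card := by
    have := le_tri (k + 1)
    rw [tri_succ] at hk
    omega
  obtain ⟨R, hRT, hR⟩ := Finset.exists_subset_card_eq hkT
  have hvT : v ∉ T := Finset.disjoint_left.mp hST hvS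
  have hvR : v ∉ R := fun h => hvT (hRT h)
  have hdel := scost_le_scost_erase_add (G := G) hvS
  refine le_scost (M := insert v R) (Finset.insert_subset (Finset.mem_union_left _ hvS)
    (hRT.trans Finset.subset_union_right)) (Finset.insert_nonempty v R) fun I hIM hI hind => ?_
  rw [Finset.card_insert_of_notMem hvR, hR]
  by_cases hvI : v ∈ I
  · have hIv : I = {v} := by
      refine Finset.eq_singleton_iff_unique_mem.mpr ⟨hvI, fun x hx => by_contra fun hxv => ?_⟩
      have hxR : x ∈ R := (Finset.mem_insert.mp (hIM hx)).resolve_left hxv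
      exact hind hvI hx (Ne.symm hxv) (hT x (hRT hxR))
    have hsplit : (S ∪ T) \ I = S.erase v ∪ T := by
      rw [hIv, Finset.union_sdiff_distrib, Finset.sdiff_singleton_eq_erase,
        Finset.sdiff_singleton_eq_erase, Finset.erase_eq_of_notMem hvT]
    rw [hsplit]
    have := scost_add_card_le_scost_union (G := G) (hST.mono_left (Finset.erase_subset v S))
    omega
  · have hIR : I ⊆ R := fun x hx =>
      (Finset.mem_insert.mp (hIM hx)).resolve_left fun h => hvI (h ▸ hx)
    have hIT : I ⊆ T := hIR.trans hRT
    have hIcard : I.card ≤ k + 2 := hR ▸ Finset.card_le_card hIR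
    have hcard : (T \ I).card = T.card - I.card := Finset.card_sdiff_of_subset hIT
    have hsplit : (S ∪ T) \ I = S ∪ T \ I := by
      rw [Finset.union_sdiff_distrib,
        Finset.sdiff_eq_self_of_disjoint (hST.mono_right hIT)]
    rw [hsplit]
    have := ih (T \ I) (Finset.sdiff_ssubset hIT hI) (fun w hw => hT w (Finset.sdiff_subset hw))
      (hST.mono_right Finset.sdiff_subset) (k := k) (by rw [tri_succ] at hk; omega)
    omega

end SimpleGraph

theorem stmt9_general (G : SimpleGraph V) (v : V) (R : Finset V)
    (hv : IsStem G v) (hR : ∀ w, w ∈ R ↔ (G.Adj v w ∧ IsLeaf G w))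
    (htri : IsTriangular (R.card + 1)) :
    scost G (Finset.univ \ R) + R.card + uval R.card ≤ scost G Finset.univ := by
  classical
  obtain ⟨_ | k, hk⟩ := htri
  · simp [tri] at hk
  have hvR : v ∉ R := fun h => G.irrefl ((hR v).mp h).1
  have hdeg : ((Finset.univ \ R).filter (G.Adj v)).card ≤ 1 := by
    refine le_trans ?_ hv.2
    rw [← Set.ncard_coe_finset]
    refine Set.ncard_le_ncard (fun w hw => ?_) (Set.toFinite _)
    simp only [Finset.coe_filter, Finset.mem_sdiff, Finset.mem_univ, true_and,
      Set.mem_ofPred_eq] at hw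
    exact ⟨hw.2, fun hleaf => hw.1 ((hR w).mpr ⟨hw.2, hleaf⟩)⟩
  have huval : uval R.card = k :=
    uval_eq_of_tri_le_of_lt (by rw [tri_succ] at hk; omega) (by omega)
  have key := G.scost_add_card_add_le_of_forall_adj
    (Finset.mem_sdiff.mpr ⟨Finset.mem_univ v, hvR⟩) hdeg (fun w hw => ((hR w).mp hw).1)
    Finset.sdiff_disjoint hk.ge
  rwa [Finset.sdiff_union_of_subset (Finset.subset_univ R), ← huval] at key

/-- If `v` is a stem in a forest `T` with `r ≥ 1` leaf neighbors (forming the set `R`)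
and `r + 1` is triangular, then `s̊(T) ≥ s̊(T - R) + r + u_r`. -/
theorem stmt9 (G : SimpleGraph V) (hG : G.IsAcyclic) (v : V) (R : Finset V)
    (hv : IsStem G v) (hR : ∀ w, w ∈ R ↔ (G.Adj v w ∧ IsLeaf G w)) (hr : 1 ≤ R.card)
    (htri : IsTriangular (R.card + 1)) :
    scost G (Finset.univ \ R) + R.card + uval R.card ≤ scost G Finset.univ :=
  stmt9_general G v R hv hR htri
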